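/- Weak duality on the extended complex: let x̂ = x + y be a q-cycle on K̂ homologous to z (x on original edges, y on u-edges), with π ∈ Ĉ_{q+1} of zero μ-component and ∂̂π = z − x̂ (so y_j = −π_j). Let φ̂ = (f̃, g̃) with |f̃_i| ≤ c_i, |g̃_j| ≤ a_j, φ̂(∂̂τ_j) = 0 for all j, and φ̂(z) ≤ 0. Then 0 ≤ φ̂(−z) ≤ Σ_i c_i|x_i| + Σ_j a_j|π_j|. -/
import Mathlib


open Finset

/-- Weak duality on the extended complex K̂: with x̂ = x + y = z − ∂̂π (π with zero
    μ-component, so y = −π), and φ̂ = (f̃, g̃) feasible and conservative with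
    φ̂(z) ≤ 0, one has 0 ≤ φ̂(−z) ≤ Σ_i c_i|x_i| + Σ_j a_j|π_j|. -/
theorem weak_duality_hatK {E F : Type*} [Fintype E] [Fintype F]
    (bd : Matrix E F ℤ) (c : E → ℤ) (a : F → ℤ)
    (hc : ∀ i, 0 ≤ c i) (ha : ∀ j, 0 ≤ a j)
    (z x : E → ℤ) (y π : F → ℤ)
    (hx : x = z - bd.mulVec π)  -- edge component of z − ∂̂(π,0)
    (hy : y = -π)               -- u-edge component of z − ∂̂(π,0)
    (f : E → ℤ) (g : F → ℤ)     -- φ̂ = (f̃, g̃)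
    (hfc : ∀ i, |f i| ≤ c i)
    (hga : ∀ j, |g j| ≤ a j)
    (hconserv : ∀ j, (∑ i, f i * bd i j) + g j = 0)  -- φ̂(∂̂τ_j) = 0
    (hfz : ∑ i, f i * z i ≤ 0) :                     -- φ̂(z) ≤ 0 (z has zero u-component)
    0 ≤ -(∑ i, f i * z i) ∧
      -(∑ i, f i * z i) ≤ ∑ i, c i * |x i| + ∑ j, a j * |π j| := by
  refine ⟨by linarith, ?_⟩
  have key : ∑ i, f i * z i = (∑ i, f i * x i) - ∑ j, g j * π j := by
    have h1 : ∑ i, f i * x i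
        = (∑ i, f i * z i) - ∑ i, ∑ j, f i * (bd i j * π j) := by
      rw [hx]
      simp [Matrix.mulVec, dotProduct, mul_sub, Finset.sum_sub_distrib,
        Finset.mul_sum]
    have h2 : ∑ i, ∑ j, f i * (bd i j * π j) = ∑ j, (∑ i, f i * bd i j) * π j := by
      rw [Finset.sum_comm]
      congr 1; ext j
      rw [Finset.sum_mul]
      congr 1; ext i; ring
    have h3 : ∑ j, (∑ i, f i * bd i j) * π j = -∑ j, g j * π j := by
      rw [← Finset.sum_neg_distrib]
      congr 1; ext j
      have := hconserv j
      have : (∑ i, f i * bd i j) = -g j := by linarith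
      rw [this]; ring
    rw [h1, h2, h3]; ring
  have hb1 : -(∑ i, f i * x i) ≤ ∑ i, c i * |x i| := by
    rw [← Finset.sum_neg_distrib]
    apply Finset.sum_le_sum
    intro i _
    calc -(f i * x i) ≤ |f i * x i| := neg_le_abs _
      _ = |f i| * |x i| := abs_mul _ _
      _ ≤ c i * |x i| := mul_le_mul_of_nonneg_right (hfc i) (abs_nonneg _)
  have hb2 : ∑ j, g j * π j ≤ ∑ j, a j * |π j| := by
    apply Finset.sum_le_sum
    intro j _
    calc g j * π j ≤ |g j * π j| := le_abs_self _
      _ = |g j| * |π j| := abs_mul _ _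
      _ ≤ a j * |π j| := mul_le_mul_of_nonneg_right (hga j) (abs_nonneg _)
  linarith
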